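/- arXiv:2210.13719 — 3 statements merged into one kernel-verified Lean document; each statement's English description precedes it below -/
import Mathlib

section
/- Let X = [0,1] with the Euclidean metric and let F be the set-valued map defined by F(x) = {2x, 0} for 0 ≤ x ≤ 1/2 and F(x) = {2−2x, 0} for 1/2 < x ≤ 1. Then F is strongly sensitive, with strongly sensitive constant δ = 1/8. -/
open Set Metric

section Defs

variable {X : Type*} [MetricSpace X]

/-- A set-valued map: `F` assigns to each point a nonempty closed subset and
is upper semi-continuous. -/
def IsSetValuedMap (F : X → Set X) : Prop :=
  (∀ x, (F x).Nonempty) ∧ (∀ x, IsClosed (F x)) ∧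
    ∀ x, ∀ V : Set X, IsOpen V → F x ⊆ V →
      ∃ U : Set X, IsOpen U ∧ x ∈ U ∧ ∀ t ∈ U, F t ⊆ V

/-- Lower semi-continuity of a set-valued map. -/
def LowerSemiCont (F : X → Set X) : Prop :=
  ∀ x, ∀ y ∈ F x, ∀ V : Set X, IsOpen V → y ∈ V →
    ∃ U : Set X, IsOpen U ∧ x ∈ U ∧ ∀ t ∈ U, (F t ∩ V).Nonempty

/-- An orbit of the set-valued map `F`: `o (i+1) ∈ F (o i)` for all `i`. -/
def IsOrbit (F : X → Set X) (o : ℕ → X) : Prop := ∀ i, o (i + 1) ∈ F (o i)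

/-- `P(F)`: the set of points having at least one periodic orbit. -/
def periodicPts (F : X → Set X) : Set X :=
  {x | ∃ o : ℕ → X, o 0 = x ∧ IsOrbit F o ∧ ∃ m, 1 ≤ m ∧ ∀ i, o (i + m) = o i}

/-- The inverse set-valued map `F⁻¹(x) = {y : x ∈ F y}`. -/
def Finv (F : X → Set X) : X → Set X := fun x => {y | x ∈ F y}

/-- The iterates `F^n`, with `F^0 x = {x}` and `F^{n+1} x = ⋃_{y ∈ F^n x} F y`. -/
def svIter (F : X → Set X) : ℕ → X → Set X
  | 0, x => {x}
  | n + 1, x => ⋃ y ∈ svIter F n x, F y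

/-- The inverse limit `lim← F = {(x_0,x_1,…) : x_i ∈ F (x_{i+1})}`. -/
def invLimit (F : X → Set X) : Set (ℕ → X) := {x | ∀ i, x i ∈ F (x (i + 1))}

/-- The shift map `σ(x_0, x_1, …) = (x_1, x_2, …)`. -/
def shift (x : ℕ → X) : ℕ → X := fun i => x (i + 1)

/-- The metric `ρ(x,y) = Σ_i d(x_i,y_i)/2^i` on sequences. -/
noncomputable def rho (x y : ℕ → X) : ℝ := ∑' i, dist (x i) (y i) / 2 ^ i

/-- Topological transitivity for a set-valued map. -/
def SVTransitive (F : X → Set X) : Prop :=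
  ∀ U V : Set X, IsOpen U → U.Nonempty → IsOpen V → V.Nonempty →
    ∃ n, 1 ≤ n ∧ ∃ o : ℕ → X, IsOrbit F o ∧ o 0 ∈ U ∧ o n ∈ V

/-- Strong sensitivity with a given constant `δ`. -/
def StronglySensitiveWith (F : X → Set X) (δ : ℝ) : Prop :=
  0 < δ ∧ ∀ x : X, ∀ ε > 0, ∃ y : X, dist x y < ε ∧
    ∃ o : ℕ → X, o 0 = y ∧ IsOrbit F o ∧ ∃ n, 1 ≤ n ∧ δ < infDist (o n) (svIter F n x)

/-- Strong sensitivity: some `δ > 0` is a strongly sensitive constant. -/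
def StronglySensitive (F : X → Set X) : Prop := ∃ δ, StronglySensitiveWith F δ

/-- Sensitivity for a set-valued map. -/
def SVSensitive (F : X → Set X) : Prop :=
  ∃ δ > 0, ∀ ε > 0, ∀ o : ℕ → X, IsOrbit F o →
    ∃ o' : ℕ → X, IsOrbit F o' ∧ dist (o 0) (o' 0) < ε ∧ ∃ n, 1 ≤ n ∧ δ < dist (o n) (o' n)

/-- Topological transitivity of the shift `σ` on `lim← F` (relatively open sets). -/
def ShiftTransitive (F : X → Set X) : Prop :=
  ∀ U V : Set (ℕ → X), IsOpen U → IsOpen V →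
    (U ∩ invLimit F).Nonempty → (V ∩ invLimit F).Nonempty →
    ∃ n, 1 ≤ n ∧ ∃ x ∈ U ∩ invLimit F, shift^[n] x ∈ V ∩ invLimit F

/-- Sensitivity of the shift `σ` on `lim← F` with respect to the metric `ρ`. -/
def ShiftSensitive (F : X → Set X) : Prop :=
  ∃ δ > 0, ∀ x ∈ invLimit F, ∀ ε > 0, ∃ y ∈ invLimit F,
    rho x y < ε ∧ ∃ n, 1 ≤ n ∧ δ < rho (shift^[n] x) (shift^[n] y)

/-- The set of σ-periodic points of `lim← F`. -/
def shiftPerPts (F : X → Set X) : Set (ℕ → X) :=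
  {z | z ∈ invLimit F ∧ ∃ n, 1 ≤ n ∧ shift^[n] z = z}

end Defs

/-- The tent-like set-valued map on `[0,1]`:
`F x = {2x, 0}` for `x ≤ 1/2` and `F x = {2-2x, 0}` for `x > 1/2`. -/
def tentSV : unitInterval → Set unitInterval := fun x =>
  {y | (y : ℝ) = 0 ∨ ((x : ℝ) ≤ 1 / 2 ∧ (y : ℝ) = 2 * x) ∨
       (1 / 2 < (x : ℝ) ∧ (y : ℝ) = 2 - 2 * x)}

/-- The real tent map. -/
noncomputable def tentR (x : ℝ) : ℝ := if x ≤ 1 / 2 then 2 * x else 2 - 2 * x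

lemma tentR_mem {x : ℝ} (h : x ∈ Icc (0:ℝ) 1) : tentR x ∈ Icc (0:ℝ) 1 := by
  obtain ⟨h0, h1⟩ := h
  unfold tentR; split_ifs with hx <;> constructor <;> linarith

lemma tentR_iter_mem (n : ℕ) {x : ℝ} (h : x ∈ Icc (0:ℝ) 1) :
    tentR^[n] x ∈ Icc (0:ℝ) 1 := by
  induction n with
  | zero => simpa using h
  | succ n ih => rw [Function.iterate_succ_apply']; exact tentR_mem ih

lemma tentR_half_left {c : ℝ} (h0 : 0 ≤ c) (h1 : c ≤ 1) : tentR (c / 2) = c := by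
  unfold tentR; rw [if_pos (by linarith)]; ring

lemma tentR_half_right {c : ℝ} (h0 : 0 ≤ c) (h1 : c ≤ 1) : tentR (1 - c / 2) = c := by
  unfold tentR; split_ifs with h <;> linarith

lemma mem_tentSV {w z : unitInterval} :
    z ∈ tentSV w ↔ (z:ℝ) = 0 ∨ (z:ℝ) = tentR (w:ℝ) := by
  simp only [tentSV, Set.mem_setOf_eq, tentR]
  split_ifs with h
  · constructor
    · rintro (h0 | ⟨_, h2⟩ | ⟨h3, _⟩)
      exacts [Or.inl h0, Or.inr h2, absurd h3 (not_lt.2 h)]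
    · rintro (h0 | h2); exacts [Or.inl h0, Or.inr (Or.inl ⟨h, h2⟩)]
  · push_neg at h
    constructor
    · rintro (h0 | ⟨h2, _⟩ | ⟨_, h3⟩)
      exacts [Or.inl h0, absurd h2 (not_le.2 h), Or.inr h3]
    · rintro (h0 | h2); exacts [Or.inl h0, Or.inr (Or.inr ⟨h, h2⟩)]

/-- Backward iteration: `pre n x t` is a preimage of `t` under `tentR^[n]`
that stays close to `x`. -/
noncomputable def pre : ℕ → ℝ → ℝ → ℝ
  | 0, _, t => t
  | n + 1, x, t =>
      if x ≤ 1 / 2 then pre n (tentR x) t / 2 else 1 - pre n (tentR x) t / 2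

lemma pre_mem (n : ℕ) (x : ℝ) {t : ℝ} (ht : t ∈ Icc (0:ℝ) 1) :
    pre n x t ∈ Icc (0:ℝ) 1 := by
  induction n generalizing x with
  | zero => exact ht
  | succ n ih =>
    obtain ⟨h0, h1⟩ := ih (tentR x)
    unfold pre; split_ifs <;> constructor <;> linarith

lemma tentR_iter_pre (n : ℕ) (x : ℝ) {t : ℝ} (ht : t ∈ Icc (0:ℝ) 1) :
    tentR^[n] (pre n x t) = t := by
  induction n generalizing x with
  | zero => rfl
  | succ n ih =>
    obtain ⟨h0, h1⟩ := pre_mem n (tentR x) ht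
    rw [Function.iterate_succ_apply]
    unfold pre
    split_ifs with h
    · rw [tentR_half_left h0 h1]; exact ih (tentR x)
    · rw [tentR_half_right h0 h1]; exact ih (tentR x)

lemma pre_dist (n : ℕ) {x t : ℝ} (hx : x ∈ Icc (0:ℝ) 1) (ht : t ∈ Icc (0:ℝ) 1) :
    |pre n x t - x| ≤ (1 / 2) ^ n := by
  induction n generalizing x with
  | zero =>
    simp only [pre, pow_zero]
    rw [abs_sub_le_iff]; constructor <;> linarith [hx.1, hx.2, ht.1, ht.2]
  | succ n ih =>
    have ihx := ih (tentR_mem hx)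
    unfold pre
    split_ifs with h
    · have htx : tentR x = 2 * x := by unfold tentR; rw [if_pos h]
      have : pre n (tentR x) t / 2 - x = (pre n (tentR x) t - tentR x) / 2 := by
        rw [htx]; ring
      rw [this, abs_div, abs_of_pos (by norm_num : (0:ℝ) < 2), pow_succ]
      linarith
    · have htx : tentR x = 2 - 2 * x := by unfold tentR; rw [if_neg h]
      have : 1 - pre n (tentR x) t / 2 - x = (tentR x - pre n (tentR x) t) / 2 := by
        rw [htx]; ring
      rw [this, abs_div, abs_of_pos (by norm_num : (0:ℝ) < 2), abs_sub_comm, pow_succ]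
      linarith

lemma svIter_nonempty (n : ℕ) (x : unitInterval) : (svIter tentSV n x).Nonempty := by
  induction n with
  | zero => exact ⟨x, rfl⟩
  | succ n ih =>
    obtain ⟨w, hw⟩ := ih
    refine ⟨⟨0, by norm_num, by norm_num⟩, ?_⟩
    rw [svIter, Set.mem_iUnion₂]
    exact ⟨w, hw, mem_tentSV.mpr (Or.inl rfl)⟩

lemma tentR_zero : tentR 0 = 0 := by unfold tentR; rw [if_pos (by norm_num)]; ring

lemma svIter_subset (x : unitInterval) (n : ℕ) :
    ∀ z ∈ svIter tentSV (n + 1) x, (z:ℝ) = 0 ∨ (z:ℝ) = tentR^[n + 1] (x:ℝ) := by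
  induction n with
  | zero =>
    intro z hz
    rw [svIter, Set.mem_iUnion₂] at hz
    obtain ⟨w, hw, hz⟩ := hz
    rw [show svIter tentSV 0 x = {x} from rfl, Set.mem_singleton_iff] at hw
    subst hw
    simpa using mem_tentSV.mp hz
  | succ n ih =>
    intro z hz
    rw [svIter, Set.mem_iUnion₂] at hz
    obtain ⟨w, hw, hz⟩ := hz
    rcases mem_tentSV.mp hz with h0 | h1
    · exact Or.inl h0
    rcases ih w hw with hw0 | hw1
    · rw [h1, hw0, tentR_zero]; exact Or.inl rfl
    · rw [h1, hw1]; exact Or.inr (Function.iterate_succ_apply' tentR (n + 1) _).symm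

/-- `tentSV` is strongly sensitive with strongly sensitive
constant `δ = 1/8`. -/
theorem stmt7 : StronglySensitiveWith tentSV (1 / 8) := by
  refine ⟨by norm_num, fun x ε hε => ?_⟩
  obtain ⟨m, hm⟩ := exists_pow_lt_of_lt_one hε (by norm_num : (1:ℝ)/2 < 1)
  set n := m + 1 with hn_def
  have hn : ((1:ℝ) / 2) ^ n < ε :=
    lt_of_le_of_lt (pow_le_pow_of_le_one (by norm_num) (by norm_num) (Nat.le_succ m)) hm
  have hx : (x:ℝ) ∈ Icc (0:ℝ) 1 := x.2
  set xn := tentR^[n] (x:ℝ) with hxn_def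
  have hxn : xn ∈ Icc (0:ℝ) 1 := tentR_iter_mem n hx
  set t : ℝ := if xn ≤ 1 / 2 then xn + 1 / 4 else xn - 1 / 4 with ht_def
  have ht : t ∈ Icc (0:ℝ) 1 := by
    rw [ht_def]; split_ifs with h <;> constructor <;> linarith [hxn.1, hxn.2]
  have ht0 : (1:ℝ) / 4 ≤ |t - 0| := by
    rw [sub_zero, abs_of_nonneg ht.1, ht_def]
    split_ifs with h <;> linarith [hxn.1, hxn.2]
  have htxn : (1:ℝ) / 4 ≤ |t - xn| := by
    rw [ht_def]; split_ifs with h <;> rw [abs_sub_comm] <;>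
      simp [abs_of_nonneg, abs_of_nonpos] <;> norm_num
  set y : ℝ := pre n (x:ℝ) t with hy_def
  have hy : y ∈ Icc (0:ℝ) 1 := pre_mem n (x:ℝ) ht
  have horb : ∀ i : ℕ, tentR^[i] y ∈ Icc (0:ℝ) 1 := fun i => tentR_iter_mem i hy
  refine ⟨⟨y, hy⟩, ?_, fun i => ⟨tentR^[i] y, horb i⟩, ?_, ?_, n, Nat.le_add_left 1 m, ?_⟩
  · rw [Subtype.dist_eq, Real.dist_eq, abs_sub_comm]
    exact lt_of_le_of_lt (pre_dist n hx ht) hn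
  · simp
  · intro i
    exact mem_tentSV.mpr (Or.inr (Function.iterate_succ_apply' tentR i y))
  · have hyn : tentR^[n] y = t := tentR_iter_pre n (x:ℝ) ht
    have hbound : ∀ z ∈ svIter tentSV n x,
        (1:ℝ) / 4 ≤ dist (⟨tentR^[n] y, horb n⟩ : unitInterval) z := by
      intro z hz
      rw [Subtype.dist_eq, Real.dist_eq]
      show (1:ℝ) / 4 ≤ |tentR^[n] y - (z:ℝ)|
      rw [hyn]
      rcases svIter_subset x m z hz with h0 | h1
      · rw [h0]; exact ht0
      · rw [h1]; exact htxn
    by_contra hc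
    push_neg at hc
    obtain ⟨z, hz, hdz⟩ := (infDist_lt_iff (svIter_nonempty n x)).mp
      (lt_of_le_of_lt hc (by norm_num : (1:ℝ) / 8 < 1 / 4))
    exact absurd (hbound z hz) (not_le.2 hdz)
end

section
/- Let X = [0,1] with the Euclidean metric and let F be the set-valued map defined by F(x) = {2x, 0} for 0 ≤ x ≤ 1/2 and F(x) = {2−2x, 0} for 1/2 < x ≤ 1, so that F^{-1}(0) = [0,1] and F^{-1}(x) = {x/2, 1 − x/2} for 0 < x ≤ 1. Then F^{-1} is not strongly sensitive. -/
open Set Metric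

lemma zero_mem_tentSV (y : unitInterval) : (0 : unitInterval) ∈ tentSV y := by
  left; simp

lemma svIter_univ (n : ℕ) (hn : 1 ≤ n) :
    svIter (Finv tentSV) n 0 = Set.univ := by
  induction n with
  | zero => omega
  | succ n ih =>
    rcases Nat.eq_or_lt_of_le hn with h | h
    · -- n = 0
      have hn0 : n = 0 := by omega
      subst hn0
      ext z
      simp only [svIter, Set.mem_iUnion, Set.mem_univ, iff_true]
      exact ⟨0, rfl, zero_mem_tentSV z⟩
    · have ih' := ih (by omega)
      ext z
      simp only [svIter, ih', Set.mem_iUnion, Set.mem_univ, iff_true]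
      exact ⟨0, trivial, zero_mem_tentSV z⟩

/-- the inverse `tentSV⁻¹` satisfies `F⁻¹ 0 = [0,1]` and
`F⁻¹ x = {x/2, 1 - x/2}` for `x > 0`, and it is not strongly sensitive. -/
theorem stmt8 :
    (Finv tentSV 0 = Set.univ) ∧
    (∀ x : unitInterval, 0 < (x : ℝ) →
      Finv tentSV x = {y | (y : ℝ) = x / 2 ∨ (y : ℝ) = 1 - x / 2}) ∧
    ¬ StronglySensitive (Finv tentSV) := by
  refine ⟨?_, ?_, ?_⟩
  · ext y
    simp only [Set.mem_univ, iff_true, Finv, Set.mem_setOf_eq]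
    exact zero_mem_tentSV y
  · intro x hx
    have hx1 : (x : ℝ) ≤ 1 := x.2.2
    apply Set.ext; intro y
    simp only [Finv, tentSV, Set.mem_image, Set.mem_setOf_eq]
    constructor
    · rintro ⟨a, (h0 | ⟨hy, hx2⟩ | ⟨hy, hx2⟩), rfl⟩
      · exact absurd h0 (by linarith)
      · left; linarith
      · right; linarith
    · rintro (h | h)
      · refine ⟨⟨(x : ℝ) / 2, ⟨by have := x.2.1; linarith, by linarith⟩⟩,
          Or.inr (Or.inl ⟨by simpa using by linarith, by simp; ring⟩), h.symm⟩
      · by_cases hy : (1 : ℝ) - (x : ℝ) / 2 ≤ 1/2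
        · have hxe : (x : ℝ) = 1 := le_antisymm hx1 (by linarith)
          refine ⟨⟨(1 : ℝ) - (x : ℝ) / 2, ⟨by linarith, by linarith⟩⟩,
            Or.inr (Or.inl ⟨by simpa using hy, by simp; linarith⟩), h.symm⟩
        · refine ⟨⟨(1 : ℝ) - (x : ℝ) / 2, ⟨by linarith, by linarith⟩⟩,
            Or.inr (Or.inr ⟨by simpa using by linarith, by simp; ring⟩), h.symm⟩
  · rintro ⟨δ, hδ, h⟩
    obtain ⟨y, -, o, -, -, n, hn, hlt⟩ := h 0 1 one_pos
    rw [svIter_univ n hn] at hlt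
    rw [Metric.infDist_zero_of_mem (Set.mem_univ (o n))] at hlt
    linarith
end

section
/- Let (X,d) be a compact metric space of diameter at most 1 and F a set-valued map on X such that every orbit of every point of X is a periodic orbit. If the shift σ is sensitive on lim←F, then F is sensitive. -/
open Set Metric

section Aux

set_option linter.unusedSectionVars false

variable {X : Type*} [MetricSpace X]

private lemma shift_iterate : ∀ (n : ℕ) (x : ℕ → X) (i : ℕ), shift^[n] x i = x (i + n) := by
  intro n
  induction n with
  | zero => intro x i; simp
  | succ n ih =>
    intro x i
    rw [Function.iterate_succ_apply, ih (shift x) i]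
    rfl

private lemma per_mul {Y : Type*} (o : ℕ → Y) (p : ℕ) (hp : ∀ i, o (i + p) = o i) :
    ∀ (k i : ℕ), o (i + k * p) = o i := by
  intro k
  induction k with
  | zero => simp
  | succ k ih =>
    intro i
    have h : i + (k + 1) * p = (i + k * p) + p := by ring
    rw [h, hp, ih]

private lemma rho_summable (hdiam : ∀ x y : X, dist x y ≤ 1) (u v : ℕ → X) :
    Summable (fun i : ℕ => dist (u i) (v i) / 2 ^ i) := by
  apply Summable.of_nonneg_of_le (fun i => by positivity) (fun i => ?_) summable_geometric_two
  rw [show ((1:ℝ)/2) ^ i = 1 / 2 ^ i by rw [div_pow, one_pow]]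
  gcongr
  exact hdiam _ _

private lemma dist_zero_le_rho (hdiam : ∀ x y : X, dist x y ≤ 1) (u v : ℕ → X) :
    dist (u 0) (v 0) ≤ rho u v := by
  have h := Summable.le_tsum (rho_summable hdiam u v) 0 (fun j _ => by positivity)
  simpa [rho] using h

private lemma exists_coord_gt (hdiam : ∀ x y : X, dist x y ≤ 1) {δ : ℝ} (u v : ℕ → X)
    (h : δ < rho u v) : ∃ k, δ / 2 < dist (u k) (v k) := by
  by_contra hc
  push_neg at hc
  have h2 : Summable (fun i : ℕ => δ / 2 * (1 / 2 : ℝ) ^ i) := summable_geometric_two.mul_left _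
  have hle : rho u v ≤ ∑' i : ℕ, δ / 2 * (1 / 2 : ℝ) ^ i := by
    apply Summable.tsum_le_tsum _ (rho_summable hdiam u v) h2
    intro i
    calc dist (u i) (v i) / 2 ^ i ≤ (δ / 2) / 2 ^ i := by gcongr; exact hc i
      _ = δ / 2 * (1 / 2 : ℝ) ^ i := by
          rw [show ((1:ℝ)/2) ^ i = 1 / 2 ^ i by rw [div_pow, one_pow], mul_one_div]
  rw [tsum_mul_left, tsum_geometric_two] at hle
  unfold rho at h hle
  linarith

end Aux

/-- if `X` is compact with diameter at most 1, every orbit of every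
point of `X` is periodic, and `σ` is sensitive on `lim← F`, then `F` is sensitive. -/

theorem stmt12 {X : Type*} [MetricSpace X] [CompactSpace X]
    (hdiam : ∀ x y : X, dist x y ≤ 1) (F : X → Set X) (hF : IsSetValuedMap F)
    (hper : ∀ o : ℕ → X, IsOrbit F o → ∃ m, 1 ≤ m ∧ ∀ i, o (i + m) = o i)
    (hsens : ShiftSensitive F) :
    SVSensitive F := by
  obtain ⟨δ, hδ, hs⟩ := hsens
  refine ⟨δ / 2, by linarith, ?_⟩
  intro ε hε o ho
  obtain ⟨p, hp1, hp⟩ := hper o ho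
  -- backward sequence along the periodic orbit
  set x : ℕ → X := fun i => o (i * (p - 1)) with hxdef
  have hxinv : x ∈ invLimit F := by
    intro i
    have h1 : o ((i + 1) * (p - 1) + 1) ∈ F (o ((i + 1) * (p - 1))) := ho _
    have h2 : (i + 1) * (p - 1) + 1 = i * (p - 1) + p := by
      rw [Nat.succ_mul]; omega
    rw [h2, hp] at h1
    exact h1
  obtain ⟨y, hyinv, hclose, n₀, hn₀, hfar⟩ := hs x hxinv ε hε
  obtain ⟨k, hk⟩ := exists_coord_gt hdiam _ _ hfar
  rw [shift_iterate, shift_iterate] at hk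
  set m : ℕ := k + n₀ with hmdef
  -- choice of successors
  have hg : ∀ z : X, (hF.1 z).some ∈ F z := fun z => (hF.1 z).some_mem
  set g : X → X := fun z => (hF.1 z).some with hgdef
  -- the orbit w : reversed y-segment followed by arbitrary continuation
  set w : ℕ → X := fun i => if i ≤ m then y (m - i) else g^[i - m] (y 0) with hwdef
  have hw0 : w 0 = y m := by simp [hwdef]
  have hwm : w m = y 0 := by simp [hwdef]
  have hworb : IsOrbit F w := by
    intro i
    by_cases h1 : i + 1 ≤ m
    · simp only [hwdef, if_pos h1, if_pos (show i ≤ m by omega)]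
      have he : m - (i + 1) + 1 = m - i := by omega
      rw [← he]
      exact hyinv _
    · by_cases h2 : i ≤ m
      · have hi : i = m := by omega
        subst hi
        simp only [hwdef, if_neg h1, if_pos le_rfl, Nat.add_sub_cancel_left, Nat.sub_self]
        exact hg _
      · simp only [hwdef, if_neg h1, if_neg h2]
        have he : i + 1 - m = (i - m) + 1 := by omega
        rw [he, Function.iterate_succ_apply']
        exact hg _
  obtain ⟨q, hq1, hq⟩ := hper w hworb
  -- the forward orbit o'
  refine ⟨fun i => w (m + i), fun i => ?_, ?_, ?_⟩
  · have := hworb (m + i)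
    rwa [show m + i + 1 = m + (i + 1) from rfl] at this
  · have hx0 : x 0 = o 0 := by simp [hxdef]
    have : dist (x 0) (y 0) ≤ rho x y := dist_zero_le_rho hdiam x y
    calc dist (o 0) (w (m + 0)) = dist (x 0) (y 0) := by
          rw [show w (m + 0) = y 0 from hwm, hx0]
      _ ≤ rho x y := this
      _ < ε := hclose
  · -- the separation time n
    have hb : m + 1 ≤ (m + 1) * q := Nat.le_mul_of_pos_right _ hq1
    set a : ℕ := (m + 1) * q - m with hadef
    have ha' : (m + 1) * q = a + m := by omega
    have ha1 : 1 ≤ a := by omega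
    refine ⟨m * (p - 1) + p * a, ?_, ?_⟩
    · have := Nat.mul_le_mul hp1 ha1
      omega
    · have hon : o (m * (p - 1) + p * a) = x m := by
        rw [show m * (p - 1) + p * a = m * (p - 1) + a * p by ring]
        exact per_mul o p hp a _
      have hwn : w (m + (m * (p - 1) + p * a)) = y m := by
        obtain ⟨pp, rfl⟩ : ∃ pp, p = pp + 1 := ⟨p - 1, by omega⟩
        have he : m + (m * ((pp + 1) - 1) + (pp + 1) * a) = 0 + ((pp + 1) * (m + 1)) * q := by
          rw [show ((pp + 1) * (m + 1)) * q = (pp + 1) * ((m + 1) * q) by ring, ha']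
          simp only [Nat.add_sub_cancel]
          ring
        rw [he, per_mul w q hq, hw0]
      have hwn' : (fun i => w (m + i)) (m * (p - 1) + p * a) = y m := hwn
      rw [hon, hwn']
      exact hk
end
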